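/- For a binary quantum state set (M = 2), the proposed upper bound is attained: the maximum of Tr(ρ_0 Π_0) + Tr(ρ_1 Π_1) over all 2-outcome POVMs (Π_0, Π_1) equals Tr X_1 = Tr ρ_0 + Tr((ρ_1 − ρ_0)_+); i.e., there exists a POVM achieving this value and no POVM exceeds it. -/

import Mathlib

/-!
With `Δ = ρ₁ - ρ₀` and `Π₀ = 1 - Π₁`, the success probability is `Tr ρ₀ + Tr(Δ Π₁)`.
Both `Δ₊` and `Δ₊ - Δ` are positive semidefinite, so
`Tr Δ₊ - Tr(Δ Π₁) = Tr(Δ₊ Π₀) + Tr((Δ₊ - Δ) Π₁) ≥ 0`, the trace of a product of positive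
semidefinite matrices being nonnegative. Equality holds for the Helstrom measurement, `Π₁` the
projection onto the positive eigenspace of `Δ`, because then `Δ Π₁ = Δ₊`.
-/

open Matrix
open scoped ComplexOrder

/-- Positive part `A₊` of a Hermitian matrix (junk value `0` on non-Hermitian input). -/
noncomputable def matPosPart {n : ℕ} (A : Matrix (Fin n) (Fin n) ℂ) : Matrix (Fin n) (Fin n) ℂ :=
  if hA : A.IsHermitian then
    (hA.eigenvectorUnitary : Matrix (Fin n) (Fin n) ℂ) *
      Matrix.diagonal (fun i => if 0 < hA.eigenvalues i then (hA.eigenvalues i : ℂ) else 0) *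
      star (hA.eigenvectorUnitary : Matrix (Fin n) (Fin n) ℂ)
  else 0

/-- Projection `P₍>₎(A)` onto the span of eigenvectors of positive eigenvalues. -/
noncomputable def matProjPos {n : ℕ} (A : Matrix (Fin n) (Fin n) ℂ) : Matrix (Fin n) (Fin n) ℂ :=
  if hA : A.IsHermitian then
    (hA.eigenvectorUnitary : Matrix (Fin n) (Fin n) ℂ) *
      Matrix.diagonal (fun i => if 0 < hA.eigenvalues i then (1 : ℂ) else 0) *
      star (hA.eigenvectorUnitary : Matrix (Fin n) (Fin n) ℂ)
  else 0

/-- Projection `P₍≥₎(A)` onto the span of eigenvectors of nonnegative eigenvalues. -/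
noncomputable def matProjNonneg {n : ℕ} (A : Matrix (Fin n) (Fin n) ℂ) : Matrix (Fin n) (Fin n) ℂ :=
  if hA : A.IsHermitian then
    (hA.eigenvectorUnitary : Matrix (Fin n) (Fin n) ℂ) *
      Matrix.diagonal (fun i => if 0 ≤ hA.eigenvalues i then (1 : ℂ) else 0) *
      star (hA.eigenvectorUnitary : Matrix (Fin n) (Fin n) ℂ)
  else 0

open scoped MatrixOrder

namespace Matrix

variable {𝕜 ι : Type*} [RCLike 𝕜] [Fintype ι]

theorem PosSemidef.trace_mul_nonneg {A B : Matrix ι ι 𝕜} (hA : A.PosSemidef) (hB : B.PosSemidef) :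
    0 ≤ (A * B).trace := by
  classical
  obtain ⟨S, rfl⟩ := CStarAlgebra.nonneg_iff_eq_star_mul_self.mp hB.nonneg
  rw [← mul_assoc, trace_mul_comm, ← mul_assoc]
  exact (hA.mul_mul_conjTranspose_same S).trace_nonneg

end Matrix

section PositivePart

variable {n : ℕ} {A : Matrix (Fin n) (Fin n) ℂ}

theorem matPosPart_eq_cfc (hA : A.IsHermitian) : matPosPart A = cfc (fun x : ℝ => max x 0) A := by
  rw [hA.cfc_eq, Matrix.IsHermitian.cfc, Unitary.conjStarAlgAut_apply, matPosPart, dif_pos hA]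
  refine congrArg (_ * · * _) (congrArg diagonal (funext fun i => ?_))
  simp only [Function.comp_apply]
  split_ifs with h
  · rw [max_eq_left h.le]
    rfl
  · rw [max_eq_right (not_lt.mp h), RCLike.ofReal_zero]

theorem matProjPos_eq_cfc (hA : A.IsHermitian) :
    matProjPos A = cfc (fun x : ℝ => if 0 < x then 1 else 0) A := by
  rw [hA.cfc_eq, Matrix.IsHermitian.cfc, Unitary.conjStarAlgAut_apply, matProjPos, dif_pos hA]
  refine congrArg (_ * · * _) (congrArg diagonal (funext fun i => ?_))
  simp only [Function.comp_apply]
  split_ifs <;> simp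

theorem matPosPart_nonneg (hA : A.IsHermitian) : 0 ≤ matPosPart A := by
  rw [matPosPart_eq_cfc hA]
  exact cfc_nonneg fun x _ => le_max_right x 0

theorem le_matPosPart (hA : A.IsHermitian) : A ≤ matPosPart A := by
  rw [matPosPart_eq_cfc hA]
  conv_lhs => rw [← cfc_id' ℝ A]
  exact cfc_mono fun x _ => le_max_left x 0

theorem matProjPos_nonneg (hA : A.IsHermitian) : 0 ≤ matProjPos A := by
  rw [matProjPos_eq_cfc hA]
  exact cfc_nonneg fun x _ => by split_ifs <;> norm_num

theorem matProjPos_le_one (hA : A.IsHermitian) : matProjPos A ≤ 1 := by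
  rw [matProjPos_eq_cfc hA]
  exact cfc_le_one _ _ fun x _ => by split_ifs <;> norm_num

theorem mul_matProjPos (hA : A.IsHermitian) : A * matProjPos A = matPosPart A := by
  have hcont : ∀ f : ℝ → ℝ, ContinuousOn f (spectrum ℝ A) := fun f =>
    A.finite_real_spectrum.continuousOn f
  rw [matPosPart_eq_cfc hA, matProjPos_eq_cfc hA]
  have hmul := cfc_mul (fun x => x) (fun x : ℝ => if 0 < x then 1 else 0) A (hcont _) (hcont _)
  rw [cfc_id' ℝ A] at hmul
  rw [← hmul]
  refine cfc_congr fun x _ => ?_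
  split_ifs with hx
  · rw [mul_one, max_eq_left hx.le]
  · rw [mul_zero, max_eq_right (not_lt.mp hx)]

theorem trace_mul_le_trace_matPosPart (hA : A.IsHermitian) {P : Matrix (Fin n) (Fin n) ℂ}
    (hP_nonneg : 0 ≤ P) (hP_le : P ≤ 1) : (A * P).trace ≤ (matPosPart A).trace := by
  have hsplit : (matPosPart A).trace =
      (matPosPart A * (1 - P)).trace + ((matPosPart A - A) * P).trace + (A * P).trace := by
    rw [← trace_add, ← trace_add, mul_sub, sub_mul, mul_one]
    abel_nf
  rw [hsplit]
  refine le_add_of_nonneg_left (add_nonneg ?_ ?_)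
  · exact (matPosPart_nonneg hA).posSemidef.trace_mul_nonneg (sub_nonneg.mpr hP_le).posSemidef
  · exact (sub_nonneg.mpr (le_matPosPart hA)).posSemidef.trace_mul_nonneg hP_nonneg.posSemidef

end PositivePart

theorem Matrix.trace_mul_add_trace_mul_of_add_eq_one {R ι : Type*} [Ring R] [Fintype ι]
    [DecidableEq ι] (ρ₀ ρ₁ : Matrix ι ι R) {P₀ P₁ : Matrix ι ι R} (hP : P₀ + P₁ = 1) :
    (ρ₀ * P₀).trace + (ρ₁ * P₁).trace = ρ₀.trace + ((ρ₁ - ρ₀) * P₁).trace := by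
  rw [eq_sub_of_add_eq hP, mul_sub, mul_one, sub_mul, trace_sub, trace_sub]
  abel

theorem stmt_3_general {n : ℕ} (ρ₀ ρ₁ : Matrix (Fin n) (Fin n) ℂ)
    (h₀ : ρ₀.PosSemidef) (h₁ : ρ₁.PosSemidef) :
    IsGreatest {x : ℝ | ∃ P₀ P₁ : Matrix (Fin n) (Fin n) ℂ, P₀.PosSemidef ∧ P₁.PosSemidef ∧
        P₀ + P₁ = 1 ∧ x = (ρ₀ * P₀).trace.re + (ρ₁ * P₁).trace.re}
      (ρ₀.trace.re + (matPosPart (ρ₁ - ρ₀)).trace.re) := by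
  have hΔ : (ρ₁ - ρ₀).IsHermitian := h₁.1.sub h₀.1
  have hvalue {P₀ P₁ : Matrix (Fin n) (Fin n) ℂ} (hP : P₀ + P₁ = 1) :
      (ρ₀ * P₀).trace.re + (ρ₁ * P₁).trace.re = ρ₀.trace.re + ((ρ₁ - ρ₀) * P₁).trace.re := by
    simpa only [Complex.add_re] using
      congrArg Complex.re (trace_mul_add_trace_mul_of_add_eq_one ρ₀ ρ₁ hP)
  constructor
  · refine ⟨1 - matProjPos (ρ₁ - ρ₀), matProjPos (ρ₁ - ρ₀),
      (sub_nonneg.mpr (matProjPos_le_one hΔ)).posSemidef, (matProjPos_nonneg hΔ).posSemidef,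
      sub_add_cancel _ _, ?_⟩
    rw [hvalue (sub_add_cancel _ _), mul_matProjPos hΔ]
  · rintro x ⟨P₀, P₁, hP₀, hP₁, hP, rfl⟩
    have hP₁_le : P₁ ≤ 1 := Matrix.le_iff.mpr (by rwa [← hP, add_sub_cancel_right])
    rw [hvalue hP, add_le_add_iff_left]
    exact (Complex.le_def.mp (trace_mul_le_trace_matPosPart hΔ hP₁.nonneg hP₁_le)).1

/-- For a binary quantum state set, the maximum of
`Tr(ρ₀Π₀) + Tr(ρ₁Π₁)` over 2-outcome POVMs equals `Tr ρ₀ + Tr((ρ₁ − ρ₀)₊)`: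
it is attained by some POVM and no POVM exceeds it. -/
theorem stmt_3 {n : ℕ} (ρ₀ ρ₁ : Matrix (Fin n) (Fin n) ℂ)
    (h₀ : ρ₀.PosSemidef) (h₁ : ρ₁.PosSemidef)
    (ht₀ : 0 < ρ₀.trace.re) (ht₁ : 0 < ρ₁.trace.re)
    (hsum : ρ₀.trace.re + ρ₁.trace.re = 1) :
    IsGreatest {x : ℝ | ∃ P₀ P₁ : Matrix (Fin n) (Fin n) ℂ, P₀.PosSemidef ∧ P₁.PosSemidef ∧
        P₀ + P₁ = 1 ∧ x = (ρ₀ * P₀).trace.re + (ρ₁ * P₁).trace.re}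
      (ρ₀.trace.re + (matPosPart (ρ₁ - ρ₀)).trace.re) :=
  stmt_3_general ρ₀ ρ₁ h₀ h₁
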